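/- Fix n ∈ ℕ, ε > 0 and K ≥ 2^n·ε, and let (P, v) be the packing game of the instability construction with weights w. Then the allocation y : P → ℝ with y(r) = 1 and y(p_i^{(l)}) = y(q_i^{(l)}) = l·K for all l ∈ {1,…,n+2}, i ∈ {1,…,4}, is the nucleolus of (P, v): y(P) = v(P), and θ_v(z) ≤_lex θ_v(y) for every z : P → ℝ with z(P) = v(P). -/

import Mathlib

/-- The players of the instability construction: a root `r`, and players `p i (l)`,
`q i (l)` for levels `l ∈ {1, …, n+2}` (encoded by `Fin (n+2)`, level `= l.1 + 1`) and
`i ∈ {1, …, 4}`. -/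
inductive Player (n : ℕ) : Type where
  | r : Player n
  | p : Fin (n + 2) → Fin 4 → Player n
  | q : Fin (n + 2) → Fin 4 → Player n
  deriving DecidableEq, Fintype

/-- Index set for the family `𝒮` of the instability construction. -/
inductive Idx (n : ℕ) : Type where
  | root : Idx n
  | rootP : Fin 4 → Idx n
  | pair : Fin (n + 2) → Fin 4 → Idx n
  | quad : Fin (n + 1) → Fin 4 → Idx n
  deriving DecidableEq, Fintype

/-- The coalitions of the family `𝒮`: `{r}`; `{r, p_i^{(1)}}`; `{p_i^{(l)}, q_i^{(l)}}`;
and `{q_1^{(l)}, q_2^{(l)}, q_3^{(l)}, q_4^{(l)}, p_i^{(l+1)}}`. -/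
def coal {n : ℕ} : Idx n → Finset (Player n)
  | .root => {Player.r}
  | .rootP i => {Player.r, Player.p 0 i}
  | .pair l i => {Player.p l i, Player.q l i}
  | .quad l i => {Player.q l.castSucc 0, Player.q l.castSucc 1, Player.q l.castSucc 2,
      Player.q l.castSucc 3, Player.p l.succ i}

/-- The weights of the family `𝒮`: `rootW` on `{r}` (which is `1` for `w` and `1 − ε` for
`w̃`); `1` on `{r, p_i^{(1)}}`; `2·l·K` on `{p_i^{(l)}, q_i^{(l)}}`; and `4·l·K` on
`{q_1^{(l)}, …, q_4^{(l)}, p_i^{(l+1)}}`. -/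
noncomputable def wt {n : ℕ} (K rootW : ℝ) : Idx n → ℝ
  | .root => rootW
  | .rootP _ => 1
  | .pair l _ => 2 * ((l.1 : ℝ) + 1) * K
  | .quad l _ => 4 * ((l.1 : ℝ) + 1) * K

/-- The packing game of the instability construction: `packV n K rootW S` is the maximum
total weight of a packing of pairwise disjoint members of `𝒮` inside `S` (the empty
packing is allowed). -/
noncomputable def packV (n : ℕ) (K rootW : ℝ) (S : Finset (Player n)) : ℝ :=
  ((Finset.univ : Finset (Idx n)).powerset.filter (fun F =>
      (∀ j ∈ F, coal j ⊆ S) ∧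
      ∀ j ∈ F, ∀ j' ∈ F, j ≠ j' → Disjoint (coal j) (coal j'))).sup'
    ⟨∅, by simp⟩ (fun F => ∑ j ∈ F, wt K rootW j)

/-- The sorted (non-decreasing) list of excesses `y(S) − v(S)` over all coalitions
`S ⊆ P`. -/
noncomputable def excessList (n : ℕ) (v : Finset (Player n) → ℝ) (y : Player n → ℝ) :
    List ℝ :=
  ((Finset.univ : Finset (Player n)).powerset.val.map
    fun S => (∑ p ∈ S, y p) - v S).sort (· ≤ ·)

/-- Lexicographic order (`≤`) on lists of reals. -/
def lexLE (l₁ l₂ : List ℝ) : Prop := l₁ = l₂ ∨ List.Lex (· < ·) l₁ l₂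


/-! Every member of `𝒮` is worth at most its `y`-value, and `y(P)` is attained by packing `{r}`
and all pairs, so `y` lies in the core and all its excesses are nonnegative. An efficient `z`
outside the core has a negative excess and loses at once. An efficient `z` in the core is tight
on `{r}` and on every pair, so `z − y` vanishes at `r` and is antisymmetric on each pair. If
`z ≠ y`, let `l` be the lowest level where it is nonzero and `β = l·K`. A coalition splitting a
pair of level `l'` has `y`-excess at least `l'·K`, because the members of `𝒮` covering the
unmatched player carry at least that much slack; hence every coalition with `y`-excess below `β`
keeps the pairs of level `≥ l` together and has the same excess under `z`. But the singleton of
the player of level `l` with `z < y` has `z`-excess below `β` and `y`-excess at least `β`. -/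

section SortedLex

variable {α : Type*} [LinearOrder α]

theorem List.lex_lt_of_countP_le {a b : List α} (ha : a.Pairwise (· ≤ ·))
    (hb : b.Pairwise (· ≤ ·)) (hlen : a.length = b.length) (t : α)
    (hbelow : ∀ s < t, a.countP (· ≤ s) = b.countP (· ≤ s))
    (hat : b.countP (· ≤ t) < a.countP (· ≤ t)) :
    List.Lex (· < ·) a b := by
  induction a generalizing b with
  | nil => simp at hat
  | cons x a ih =>
    cases b with
    | nil => simp at hlen
    | cons w b =>
      rcases lt_trichotomy x w with hxw | rfl | hwx
      · exact .rel hxw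
      · refine .cons (ih (List.pairwise_cons.mp ha).2 (List.pairwise_cons.mp hb).2
          (by simpa using hlen) (fun s hs => ?_) ?_)
        · have := hbelow s hs
          simp only [List.countP_cons] at this
          omega
        · simp only [List.countP_cons] at hat
          omega
      · -- every entry of `x :: a` exceeds `w`, the least entry of `w :: b`
        have hnone : ∀ s, s < x → (x :: a).countP (· ≤ s) = 0 := fun s hs =>
          List.countP_eq_zero.mpr fun v hv hvs => by
            rcases List.mem_cons.mp hv with rfl | hv
            · exact absurd (of_decide_eq_true hvs) (not_le.mpr hs)
            · exact absurd ((List.pairwise_cons.mp ha).1 v hv)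
                (not_le.mpr (lt_of_le_of_lt (of_decide_eq_true hvs) hs))
        rcases lt_or_ge w t with hwt | htw
        · have hw : 0 < (w :: b).countP (· ≤ w) := List.countP_pos_iff.mpr ⟨w, by simp, by simp⟩
          have := hbelow w hwt
          rw [hnone w hwx] at this
          omega
        · rw [hnone t (lt_of_le_of_lt htw hwx)] at hat
          omega

theorem Multiset.sort_map_lex_lt {ι : Type*} (U : Multiset ι) (f g : ι → α) (β : α)
    (hagree : ∀ i ∈ U, g i < β → f i = g i) (hwit : ∃ i ∈ U, f i < β ∧ β ≤ g i) :
    List.Lex (· < ·) ((U.map f).sort (· ≤ ·)) ((U.map g).sort (· ≤ ·)) := by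
  classical
  obtain ⟨i₁, hi₁, hfi₁, hgi₁⟩ := hwit
  -- below the least `f`-value where `g ≥ β` the two lists have the same entries, and at
  -- that value the `f`-list has one more
  obtain ⟨i₀, hi₀, hmin⟩ := (U.toFinset.filter (β ≤ g ·)).exists_min_image f
    ⟨i₁, by simpa [hi₁] using hgi₁⟩
  simp only [Finset.mem_filter, Multiset.mem_toFinset] at hi₀ hmin
  have htβ : f i₀ < β := lt_of_le_of_lt (hmin i₁ ⟨hi₁, hgi₁⟩) hfi₁
  have hcount : ∀ (M : Multiset α) (s : α),
      (M.sort (· ≤ ·)).countP (· ≤ s) = M.countP (· ≤ s) := fun M s => by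
    rw [← Multiset.coe_countP, Multiset.sort_eq]
  refine List.lex_lt_of_countP_le (Multiset.pairwise_sort _ _) (Multiset.pairwise_sort _ _)
    (by simp) (f i₀) (fun s hs => ?_) ?_ <;>
    simp only [hcount, Multiset.countP_map, ← Multiset.countP_eq_card_filter]
  · refine Multiset.countP_congr rfl fun i hi => propext ?_
    by_cases hgi : g i < β
    · rw [hagree i hi hgi]
    · have := hmin i ⟨hi, not_lt.mp hgi⟩
      constructor <;> intro h
      · exact absurd (lt_of_le_of_lt h hs) (not_lt.mpr this)
      · exact absurd (lt_of_le_of_lt h (hs.trans htβ)) hgi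
  · rw [Multiset.countP_eq_countP_filter_add U (f · ≤ f i₀) (g · ≤ f i₀), Multiset.countP_filter,
      Multiset.countP_filter]
    have hsame : U.countP (fun i => f i ≤ f i₀ ∧ g i ≤ f i₀) = U.countP (g · ≤ f i₀) :=
      Multiset.countP_congr rfl fun i hi => propext
        ⟨And.right, fun h => ⟨(hagree i hi (lt_of_le_of_lt h htβ)).symm ▸ h, h⟩⟩
    have hnew : 0 < U.countP (fun i => f i ≤ f i₀ ∧ ¬g i ≤ f i₀) :=
      Multiset.countP_pos_of_mem hi₀.1 ⟨le_rfl, not_le.mpr (lt_of_lt_of_le htβ hi₀.2)⟩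
    omega

end SortedLex

section Packing

variable {n : ℕ} {K ρ : ℝ} {S : Finset (Player n)}

theorem sum_wt_le_packV {F : Finset (Idx n)} (hsub : ∀ j ∈ F, coal j ⊆ S)
    (hdisj : (F : Set (Idx n)).PairwiseDisjoint coal) :
    ∑ j ∈ F, wt K ρ j ≤ packV n K ρ S :=
  Finset.le_sup' (fun F => ∑ j ∈ F, wt K ρ j)
    (Finset.mem_filter.mpr ⟨Finset.mem_powerset.mpr (Finset.subset_univ F), hsub,
      fun _ hj _ hj' hne => hdisj hj hj' hne⟩)

theorem packV_le {c : ℝ} (h : ∀ F : Finset (Idx n), (∀ j ∈ F, coal j ⊆ S) →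
      (F : Set (Idx n)).PairwiseDisjoint coal → ∑ j ∈ F, wt K ρ j ≤ c) :
    packV n K ρ S ≤ c :=
  Finset.sup'_le _ _ fun F hF =>
    have hF := (Finset.mem_filter.mp hF).2
    h F hF.1 fun _ hj _ hj' hne => hF.2 _ hj _ hj' hne

theorem packV_nonneg : 0 ≤ packV n K ρ S := by
  simpa using sum_wt_le_packV (K := K) (ρ := ρ) (S := S) (F := ∅) (by simp) (by simp)

variable {x : Player n → ℝ}

theorem sum_wt_le_sum_biUnion (hw : ∀ j, wt K ρ j ≤ ∑ a ∈ coal j, x a) {F : Finset (Idx n)}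
    (hdisj : (F : Set (Idx n)).PairwiseDisjoint coal) :
    ∑ j ∈ F, wt K ρ j ≤ ∑ a ∈ F.biUnion coal, x a := by
  rw [Finset.sum_biUnion hdisj]
  exact Finset.sum_le_sum fun j _ => hw j

theorem packV_le_sum (hx : ∀ a, 0 ≤ x a) (hw : ∀ j, wt K ρ j ≤ ∑ a ∈ coal j, x a) :
    packV n K ρ S ≤ ∑ a ∈ S, x a :=
  packV_le fun _ hsub hdisj => (sum_wt_le_sum_biUnion hw hdisj).trans
    (Finset.sum_le_sum_of_subset_of_nonneg (Finset.biUnion_subset.mpr hsub) fun a _ _ => hx a)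

/-- A packing either covers `a` by a member with slack `≥ c`, or leaves out `x a ≥ c`. -/
theorem packV_le_sum_sub (hx : ∀ a, 0 ≤ x a) (hw : ∀ j, wt K ρ j ≤ ∑ a ∈ coal j, x a)
    {a : Player n} (ha : a ∈ S) {c : ℝ} (hc : c ≤ x a)
    (hslack : ∀ j, a ∈ coal j → coal j ⊆ S → wt K ρ j + c ≤ ∑ b ∈ coal j, x b) :
    packV n K ρ S ≤ ∑ b ∈ S, x b - c := by
  refine packV_le fun F hsub hdisj => ?_
  have hcover : ∑ b ∈ F.biUnion coal, x b ≤ ∑ b ∈ S, x b :=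
    Finset.sum_le_sum_of_subset_of_nonneg (Finset.biUnion_subset.mpr hsub) fun b _ _ => hx b
  by_cases hacov : a ∈ F.biUnion coal
  · obtain ⟨j₀, hj₀, haj₀⟩ := Finset.mem_biUnion.mp hacov
    have hrest : ∑ j ∈ F.erase j₀, wt K ρ j ≤ ∑ j ∈ F.erase j₀, ∑ b ∈ coal j, x b :=
      Finset.sum_le_sum fun j _ => hw j
    have hj₀slack := hslack j₀ haj₀ (hsub j₀ hj₀)
    rw [Finset.sum_biUnion hdisj] at hcover
    rw [← Finset.add_sum_erase F _ hj₀] at hcover ⊢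
    linarith
  · have hins : ∑ b ∈ insert a (F.biUnion coal), x b ≤ ∑ b ∈ S, x b :=
      Finset.sum_le_sum_of_subset_of_nonneg
        (Finset.insert_subset ha (Finset.biUnion_subset.mpr hsub)) fun b _ _ => hx b
    rw [Finset.sum_insert hacov] at hins
    linarith [sum_wt_le_sum_biUnion hw hdisj]

end Packing

def Player.equivSum (n : ℕ) :
    Unit ⊕ (Fin (n + 2) × Fin 4) ⊕ (Fin (n + 2) × Fin 4) ≃ Player n where
  toFun
    | .inl _ => .r
    | .inr (.inl v) => .p v.1 v.2
    | .inr (.inr v) => .q v.1 v.2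
  invFun
    | .r => .inl ()
    | .p l i => .inr (.inl (l, i))
    | .q l i => .inr (.inr (l, i))
  left_inv := by rintro (⟨⟩ | ⟨l, i⟩ | ⟨l, i⟩) <;> rfl
  right_inv := by rintro (_ | ⟨l, i⟩ | ⟨l, i⟩) <;> rfl

theorem Player.sum_eq {n : ℕ} (f : Player n → ℝ) :
    ∑ a, f a = f .r + ∑ v : Fin (n + 2) × Fin 4, (f (.p v.1 v.2) + f (.q v.1 v.2)) := by
  rw [← (Player.equivSum n).sum_comp, Fintype.sum_sum_type, Fintype.sum_sum_type,
    Finset.sum_add_distrib]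
  simp [Player.equivSum]

def excess {n : ℕ} (v : Finset (Player n) → ℝ) (x : Player n → ℝ) (S : Finset (Player n)) : ℝ :=
  ∑ a ∈ S, x a - v S

/-- The allocation `y` of the theorem. -/
def levelAlloc (n : ℕ) (K : ℝ) : Player n → ℝ
  | .r => 1
  | .p l _ => ((l.1 : ℝ) + 1) * K
  | .q l _ => ((l.1 : ℝ) + 1) * K

section LevelAlloc

variable {n : ℕ} {K : ℝ}

theorem levelAlloc_nonneg (hK : 0 ≤ K) (a : Player n) : 0 ≤ levelAlloc n K a := by
  cases a <;> simp only [levelAlloc] <;> positivity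

theorem sum_coal_quad_levelAlloc (l : Fin (n + 1)) (i : Fin 4) :
    ∑ a ∈ coal (.quad l i), levelAlloc n K a = 4 * ((l.1 : ℝ) + 1) * K + ((l.1 : ℝ) + 2) * K := by
  rw [coal, Finset.sum_insert (by simp), Finset.sum_insert (by simp), Finset.sum_insert (by simp),
    Finset.sum_pair (by simp)]
  simp only [levelAlloc, Fin.val_succ, Fin.val_castSucc]
  push_cast
  ring

theorem wt_le_sum_levelAlloc (hK : 0 ≤ K) (j : Idx n) :
    wt K 1 j ≤ ∑ a ∈ coal j, levelAlloc n K a := by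
  cases j with
  | root => simp [coal, wt, levelAlloc]
  | rootP i => simp [coal, wt, levelAlloc, hK]
  | pair l i =>
    rw [coal, Finset.sum_pair (by simp)]
    exact le_of_eq (by simp only [wt, levelAlloc]; ring)
  | quad l i =>
    rw [sum_coal_quad_levelAlloc, wt]
    have : 0 ≤ ((l.1 : ℝ) + 2) * K := by positivity
    linarith

theorem packV_le_sum_levelAlloc (hK : 0 ≤ K) (S : Finset (Player n)) :
    packV n K 1 S ≤ ∑ a ∈ S, levelAlloc n K a :=
  packV_le_sum (levelAlloc_nonneg hK) (wt_le_sum_levelAlloc hK)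

theorem packV_univ (hK : 0 ≤ K) : packV n K 1 .univ = ∑ a, levelAlloc n K a := by
  refine le_antisymm (packV_le_sum_levelAlloc hK _) ?_
  let pairs : Finset (Idx n) := Finset.univ.image fun v : Fin (n + 2) × Fin 4 => .pair v.1 v.2
  have hpacking : ∑ j ∈ insert .root pairs, wt K 1 j = ∑ a, levelAlloc n K a := by
    rw [Finset.sum_insert (by simp [pairs]),
      Finset.sum_image (by intro _ _ _ _ h; simpa [Prod.ext_iff] using h), Player.sum_eq]
    simp only [wt, levelAlloc]
    congr 1
    exact Finset.sum_congr rfl fun _ _ => by ring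
  rw [← hpacking]
  refine sum_wt_le_packV (fun _ _ => Finset.subset_univ _) fun j hj j' hj' hne => ?_
  simp only [pairs, Finset.coe_insert, Finset.coe_image, Set.mem_insert_iff, Set.mem_image,
    Finset.mem_coe, Finset.mem_univ, true_and] at hj hj'
  rcases hj with rfl | ⟨⟨l, i⟩, rfl⟩ <;> rcases hj' with rfl | ⟨⟨l', i'⟩, rfl⟩ <;>
    simp_all [Function.onFun, coal, eq_comm]

theorem packV_le_sub_of_p_mem (hK : 0 ≤ K) {S : Finset (Player n)} {l : Fin (n + 2)} {i : Fin 4}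
    (hp : .p l i ∈ S) (hq : .q l i ∉ S) :
    packV n K 1 S ≤ ∑ a ∈ S, levelAlloc n K a - ((l.1 : ℝ) + 1) * K := by
  refine packV_le_sum_sub (levelAlloc_nonneg hK) (wt_le_sum_levelAlloc hK) hp le_rfl
    fun j hj hsub => ?_
  cases j with
  | root => simp [coal] at hj
  | rootP i' =>
    obtain ⟨rfl, rfl⟩ : l = 0 ∧ i = i' := by simpa [coal] using hj
    simp [coal, wt, levelAlloc]
  | pair l' i' =>
    obtain ⟨rfl, rfl⟩ : l = l' ∧ i = i' := by simpa [coal] using hj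
    exact absurd (hsub (by simp [coal])) hq
  | quad l' i' =>
    obtain ⟨rfl, rfl⟩ : l = l'.succ ∧ i = i' := by simpa [coal] using hj
    rw [sum_coal_quad_levelAlloc, wt, Fin.val_succ]
    push_cast
    linarith

theorem packV_le_sub_of_q_mem (hK : 0 ≤ K) {S : Finset (Player n)} {l : Fin (n + 2)} {i : Fin 4}
    (hq : .q l i ∈ S) (hp : .p l i ∉ S) :
    packV n K 1 S ≤ ∑ a ∈ S, levelAlloc n K a - ((l.1 : ℝ) + 1) * K := by
  refine packV_le_sum_sub (levelAlloc_nonneg hK) (wt_le_sum_levelAlloc hK) hq le_rfl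
    fun j hj hsub => ?_
  cases j with
  | root => simp [coal] at hj
  | rootP i' => simp [coal] at hj
  | pair l' i' =>
    obtain ⟨rfl, rfl⟩ : l = l' ∧ i = i' := by simpa [coal] using hj
    exact absurd (hsub (by simp [coal])) hp
  | quad l' i' =>
    obtain rfl : l = l'.castSucc := by simp [coal] at hj; omega
    rw [sum_coal_quad_levelAlloc, wt, Fin.val_castSucc]
    nlinarith

theorem mem_iff_of_excess_lt (hK : 0 ≤ K) {S : Finset (Player n)} {l : Fin (n + 2)}
    (i : Fin 4) (hS : excess (packV n K 1) (levelAlloc n K) S < ((l.1 : ℝ) + 1) * K) :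
    .p l i ∈ S ↔ .q l i ∈ S := by
  unfold excess at hS
  constructor <;> intro h <;> by_contra h'
  · linarith [packV_le_sub_of_p_mem hK h h']
  · linarith [packV_le_sub_of_q_mem hK h h']

end LevelAlloc

section Nucleolus

variable {n : ℕ} {K : ℝ}

theorem one_le_packV_singleton_r : 1 ≤ packV n K 1 {.r} := by
  simpa [wt] using sum_wt_le_packV (K := K) (ρ := 1) (S := {(.r : Player n)}) (F := {.root})
    (by simp [coal]) (by simp)

theorem le_packV_pair (l : Fin (n + 2)) (i : Fin 4) :
    2 * ((l.1 : ℝ) + 1) * K ≤ packV n K 1 {.p l i, .q l i} := by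
  simpa [wt] using sum_wt_le_packV (K := K) (ρ := 1) (S := {.p l i, .q l i}) (F := {.pair l i})
    (by simp [coal]) (by simp)

theorem tight_of_excess_nonneg {z : Player n → ℝ}
    (hcore : ∀ S, 0 ≤ excess (packV n K 1) z S) (heff : ∑ a, z a = ∑ a, levelAlloc n K a) :
    z .r = 1 ∧ ∀ l i, z (.p l i) + z (.q l i) = 2 * ((l.1 : ℝ) + 1) * K := by
  have hr : 1 ≤ z .r := by
    have := hcore {.r}
    simp only [excess, Finset.sum_singleton] at this
    linarith [one_le_packV_singleton_r (n := n) (K := K)]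
  have hpair : ∀ v : Fin (n + 2) × Fin 4,
      0 ≤ z (.p v.1 v.2) + z (.q v.1 v.2) - 2 * ((v.1.1 : ℝ) + 1) * K := fun ⟨l, i⟩ => by
    have := hcore {.p l i, .q l i}
    simp only [excess, Finset.sum_pair (show Player.p l i ≠ .q l i by simp)] at this
    linarith [le_packV_pair (K := K) l i]
  have hsum : ∑ v : Fin (n + 2) × Fin 4,
      (z (.p v.1 v.2) + z (.q v.1 v.2) - 2 * ((v.1.1 : ℝ) + 1) * K) = 1 - z .r := by
    rw [Player.sum_eq, Player.sum_eq] at heff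
    simp only [levelAlloc, ← two_mul, ← mul_assoc] at heff
    rw [Finset.sum_sub_distrib]
    linarith
  have hnonneg := Finset.sum_nonneg fun v (_ : v ∈ Finset.univ) => hpair v
  have hzero := (Finset.sum_eq_zero_iff_of_nonneg fun v _ => hpair v).mp (by linarith)
  exact ⟨by linarith, fun l i => by linarith [hzero (l, i) (Finset.mem_univ _)]⟩

theorem sum_eq_zero_of_balanced (φ : Player n → ℝ) {S : Finset (Player n)} (hr : φ .r = 0)
    (hpq : ∀ l i, φ (.p l i) + φ (.q l i) = 0)
    (hS : ∀ l i, φ (.q l i) ≠ 0 → (.p l i ∈ S ↔ .q l i ∈ S)) :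
    ∑ a ∈ S, φ a = 0 := by
  rw [← Finset.univ_inter S, ← Finset.sum_ite_mem, Player.sum_eq, hr, ite_self, zero_add]
  refine Finset.sum_eq_zero fun ⟨l, i⟩ _ => ?_
  by_cases hq : φ (.q l i) = 0
  · have hp : φ (.p l i) = 0 := by linarith [hpq l i]
    simp [hp, hq]
  · by_cases hqS : Player.q l i ∈ S
    · simp [hqS, (hS l i hq).mpr hqS, hpq l i]
    · simp [hqS, mt (hS l i hq).mp hqS]


theorem excess_eq_of_tight_of_lt (hK : 0 ≤ K) {z : Player n → ℝ} (hr : z .r = 1)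
    (hpq : ∀ l i, z (.p l i) + z (.q l i) = 2 * ((l.1 : ℝ) + 1) * K) {l₀ : Fin (n + 2)}
    (hmin : ∀ l i, z (.q l i) ≠ levelAlloc n K (.q l i) → l₀ ≤ l) {S : Finset (Player n)}
    (hS : excess (packV n K 1) (levelAlloc n K) S < ((l₀.1 : ℝ) + 1) * K) :
    excess (packV n K 1) z S = excess (packV n K 1) (levelAlloc n K) S := by
  have hbal := sum_eq_zero_of_balanced (fun a => z a - levelAlloc n K a) (S := S)
    (by simp [hr, levelAlloc]) (fun l i => by simp only [levelAlloc]; linarith [hpq l i])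
    fun l i hli => mem_iff_of_excess_lt hK i (lt_of_lt_of_le hS (mul_le_mul_of_nonneg_right
      (by exact_mod_cast Nat.succ_le_succ (hmin l i (sub_ne_zero.mp hli))) hK))
  rw [Finset.sum_sub_distrib] at hbal
  simp only [excess]
  linarith

theorem exists_excess_threshold_of_tight (hK : 0 < K) {z : Player n → ℝ} (hr : z .r = 1)
    (hpq : ∀ l i, z (.p l i) + z (.q l i) = 2 * ((l.1 : ℝ) + 1) * K) (hzy : z ≠ levelAlloc n K) :
    ∃ β, (∀ S, excess (packV n K 1) (levelAlloc n K) S < β →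
        excess (packV n K 1) z S = excess (packV n K 1) (levelAlloc n K) S) ∧
      ∃ S, excess (packV n K 1) z S < β ∧ β ≤ excess (packV n K 1) (levelAlloc n K) S := by
  classical
  have hsupp : (Finset.univ.filter fun v : Fin (n + 2) × Fin 4 =>
      z (.q v.1 v.2) ≠ levelAlloc n K (.q v.1 v.2)).Nonempty := by
    by_contra! h
    have hq : ∀ l i, z (.q l i) = levelAlloc n K (.q l i) := fun l i => by
      by_contra hli
      exact (Finset.eq_empty_iff_forall_notMem.mp h) (l, i) (by simpa using hli)
    refine hzy (funext fun a => ?_)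
    cases a with
    | r => simp [hr, levelAlloc]
    | p l i => have := hq l i; simp only [levelAlloc] at this ⊢; linarith [hpq l i]
    | q l i => exact hq l i
  obtain ⟨⟨l₀, i₀⟩, hq₀, hmin⟩ := Finset.exists_min_image _ (fun v => v.1) hsupp
  simp only [Finset.mem_filter, Finset.mem_univ, true_and] at hq₀ hmin
  refine ⟨((l₀.1 : ℝ) + 1) * K,
    fun S => excess_eq_of_tight_of_lt hK.le hr hpq fun l i => hmin (l, i), ?_⟩
  obtain ⟨a, ha, hza⟩ : ∃ a ∈ ({.p l₀ i₀, .q l₀ i₀} : Finset (Player n)),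
      z a < ((l₀.1 : ℝ) + 1) * K := by
    simp only [levelAlloc] at hq₀
    rcases lt_or_gt_of_ne hq₀ with hneg | hpos
    · exact ⟨.q l₀ i₀, by simp, hneg⟩
    · exact ⟨.p l₀ i₀, by simp, by linarith [hpq l₀ i₀]⟩
  refine ⟨{a}, ?_, not_lt.mp fun h => ?_⟩
  · simp only [excess, Finset.sum_singleton]
    linarith [packV_nonneg (n := n) (K := K) (ρ := 1) (S := {a})]
  · have := mem_iff_of_excess_lt hK.le i₀ h
    rcases Finset.mem_insert.mp ha with rfl | ha
    · simp at this
    · rw [Finset.mem_singleton.mp ha] at this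
      simp at this

theorem exists_excess_threshold (hK : 0 < K) {z : Player n → ℝ}
    (heff : ∑ a, z a = packV n K 1 .univ) (hzy : z ≠ levelAlloc n K) :
    ∃ β, (∀ S, excess (packV n K 1) (levelAlloc n K) S < β →
        excess (packV n K 1) z S = excess (packV n K 1) (levelAlloc n K) S) ∧
      ∃ S, excess (packV n K 1) z S < β ∧ β ≤ excess (packV n K 1) (levelAlloc n K) S := by
  have hy : ∀ S, 0 ≤ excess (packV n K 1) (levelAlloc n K) S := fun S =>
    sub_nonneg.mpr (packV_le_sum_levelAlloc hK.le S)
  by_cases hcore : ∀ S, 0 ≤ excess (packV n K 1) z S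
  · obtain ⟨hr, hpq⟩ := tight_of_excess_nonneg hcore (heff.trans (packV_univ hK.le))
    exact exists_excess_threshold_of_tight hK hr hpq hzy
  · obtain ⟨S, hS⟩ := not_forall.mp hcore
    exact ⟨0, fun S' hS' => absurd hS' (not_lt.mpr (hy S')), S, not_le.mp hS, hy S⟩

end Nucleolus

/-- The allocation `y` with `y(r) = 1` and
`y(p_i^{(l)}) = y(q_i^{(l)}) = l·K` is the nucleolus of the packing game `(P, v)`:
it is efficient, and its sorted excess vector is lexicographically maximal among all
efficient allocations. -/
theorem stmt16 (n : ℕ) (ε K : ℝ) (hε : 0 < ε) (hK : 2 ^ n * ε ≤ K)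
    (y : Player n → ℝ)
    (hyr : y Player.r = 1)
    (hyp : ∀ (l : Fin (n + 2)) (i : Fin 4), y (Player.p l i) = ((l.1 : ℝ) + 1) * K)
    (hyq : ∀ (l : Fin (n + 2)) (i : Fin 4), y (Player.q l i) = ((l.1 : ℝ) + 1) * K) :
    (∑ p, y p) = packV n K 1 Finset.univ ∧
    ∀ z : Player n → ℝ, (∑ p, z p) = packV n K 1 Finset.univ →
      lexLE (excessList n (packV n K 1) z) (excessList n (packV n K 1) y) := by
  have hK0 : 0 < K := lt_of_lt_of_le (by positivity) hK
  obtain rfl : y = levelAlloc n K := funext fun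
    | .r => hyr
    | .p l i => hyp l i
    | .q l i => hyq l i
  refine ⟨(packV_univ hK0.le).symm, fun z hz => ?_⟩
  by_cases hzy : z = levelAlloc n K
  · exact .inl (congrArg _ hzy)
  obtain ⟨β, hagree, S, hS⟩ := exists_excess_threshold hK0 hz hzy
  exact .inr (Multiset.sort_map_lex_lt _ _ _ β (fun S _ => hagree S)
    ⟨S, Finset.mem_powerset.mpr (Finset.subset_univ S), hS⟩)
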